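/- arXiv:math/9907001 — 3 statements merged into one kernel-verified Lean document; each statement's English description precedes it below -/
import Mathlib

section
/- Let r >= 1 be an integer, sigma an even integer, t >= 1, and for i = 1, ..., t let l_i >= 1 and a_i be integers. Set s_i = l_i*(l_i*sigma - 2*r*a_i), l = l_1 + ... + l_t, a = a_1 + ... + a_t, S = l*(l*sigma - 2*r*a), and k = l - max_i l_i. Assume s_i >= -2 for every i and s_{i0} >= 0 for some index i0. Then, as rational numbers, the sum over all pairs i < j of (l_i*l_j*sigma - r*(l_i*a_j + l_j*a_i)) is at least k*S/(2*l) - (l - 1 - k)*k. -/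
/-!
Write `σ = 2τ` and `cᵢ = lᵢτ - raᵢ`. Then `sᵢ = 2lᵢcᵢ`, `S = 2l·∑cᵢ`, and the pair term is
`lᵢcⱼ + lⱼcᵢ`, so the pair sum is `l·∑cᵢ - ∑lᵢcᵢ` and, with `m = maxᵢ lᵢ = l - k`, the claim
becomes `∑ᵢ (m - lᵢ)cᵢ ≥ -(m - 1)k`. Since `cᵢ` is an integer with `lᵢcᵢ ≥ -1`, we get `cᵢ ≥ -1`,
hence `(m - lᵢ)cᵢ ≥ -(m - 1)lᵢ`; summing this over all `i` except a maximizer of `lᵢ` (whose term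
vanishes) gives exactly `-(m - 1)(l - m)`.
-/

open Finset

section PairSums

variable {ι M : Type*} [LinearOrder ι] [AddCommGroup M]

theorem sum_product_eq_filter_lt_add_filter_gt_add_diag (s : Finset ι) (g : ι × ι → M) :
    ∑ p ∈ s ×ˢ s, g p = ∑ p ∈ (s ×ˢ s).filter (fun p => p.1 < p.2), g p
      + ∑ p ∈ (s ×ˢ s).filter (fun p => p.2 < p.1), g p + ∑ i ∈ s, g (i, i) := by
  have hgt : (s ×ˢ s).filter (fun p => ¬ p.1 < p.2 ∧ p.2 < p.1)
      = (s ×ˢ s).filter (fun p => p.2 < p.1) :=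
    filter_congr fun _ _ => and_iff_right_of_imp lt_asymm
  have hdiag : (s ×ˢ s).filter (fun p => ¬ p.1 < p.2 ∧ ¬ p.2 < p.1) = s.diag := by
    rw [diag_eq_filter]
    exact filter_congr fun _ _ => by simp only [not_lt, le_antisymm_iff, and_comm]
  rw [← sum_filter_add_sum_filter_not (s ×ˢ s) (fun p => p.1 < p.2), add_assoc]
  congr 1
  rw [← sum_filter_add_sum_filter_not ((s ×ˢ s).filter fun p => ¬ p.1 < p.2) (fun p => p.2 < p.1),
    filter_filter, filter_filter, hgt, hdiag, sum_diag]

theorem sum_filter_lt_add_swap (s : Finset ι) (f : ι → ι → M) :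
    ∑ p ∈ (s ×ˢ s).filter (fun p => p.1 < p.2), (f p.1 p.2 + f p.2 p.1)
      = ∑ i ∈ s, ∑ j ∈ s, f i j - ∑ i ∈ s, f i i := by
  have hswap : ∑ p ∈ (s ×ˢ s).filter (fun p => p.1 < p.2), f p.2 p.1
      = ∑ p ∈ (s ×ˢ s).filter (fun p => p.2 < p.1), f p.1 p.2 :=
    sum_equiv (Equiv.prodComm ι ι) (by simp [and_comm]) (by simp)
  rw [sum_add_distrib, hswap, ← sum_product',
    sum_product_eq_filter_lt_add_filter_gt_add_diag s]
  abel

end PairSums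

theorem neg_one_le_of_neg_one_le_mul {l c : ℤ} (hl : 1 ≤ l) (h : -1 ≤ l * c) : -1 ≤ c := by
  nlinarith

theorem neg_mul_le_sub_mul {l m c : ℤ} (hl : 1 ≤ l) (hlm : l ≤ m) (hc : -1 ≤ c) :
    -((m - 1) * l) ≤ (m - l) * c := by
  nlinarith [mul_nonneg (sub_nonneg.2 hlm) (neg_le_iff_add_nonneg.1 hc),
    mul_nonneg (by omega : 0 ≤ m) (sub_nonneg.2 hl)]

theorem neg_mul_sum_sub_le_sum_sub_mul {ι : Type*} [DecidableEq ι] {s : Finset ι}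
    {l c : ι → ℤ} {j : ι} (hj : j ∈ s) (hmax : ∀ i ∈ s, l i ≤ l j) (hl : ∀ i ∈ s, 1 ≤ l i)
    (hc : ∀ i ∈ s, -1 ≤ c i) :
    -((l j - 1) * (∑ i ∈ s, l i - l j)) ≤ ∑ i ∈ s, (l j - l i) * c i :=
  calc -((l j - 1) * (∑ i ∈ s, l i - l j)) = ∑ i ∈ s.erase j, -((l j - 1) * l i) := by
        rw [sum_neg_distrib, ← mul_sum, sum_erase_eq_sub hj]
    _ ≤ ∑ i ∈ s.erase j, (l j - l i) * c i := sum_le_sum fun i hi =>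
        have hi := mem_of_mem_erase hi
        neg_mul_le_sub_mul (hl i hi) (hmax i hi) (hc i hi)
    _ = ∑ i ∈ s, (l j - l i) * c i := sum_erase s (by simp)

theorem le_sum_filter_lt_mul_add_mul {ι : Type*} [LinearOrder ι] {s : Finset ι} {l c : ι → ℤ}
    {j : ι} (hj : j ∈ s) (hmax : ∀ i ∈ s, l i ≤ l j) (hl : ∀ i ∈ s, 1 ≤ l i)
    (hc : ∀ i ∈ s, -1 ≤ c i) :
    (∑ i ∈ s, l i - l j) * ∑ i ∈ s, c i - (l j - 1) * (∑ i ∈ s, l i - l j)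
      ≤ ∑ p ∈ (s ×ˢ s).filter (fun p => p.1 < p.2), (l p.1 * c p.2 + l p.2 * c p.1) := by
  have hsum : ∑ i ∈ s, (l j - l i) * c i = l j * ∑ i ∈ s, c i - ∑ i ∈ s, l i * c i := by
    rw [mul_sum, ← sum_sub_distrib]
    exact sum_congr rfl fun _ _ => by ring
  rw [sum_filter_lt_add_swap s (fun i j => l i * c j), ← sum_mul_sum]
  linarith [neg_mul_sum_sub_le_sum_sub_mul hj hmax hl hc]

/-- Arithmetic estimate from the proof of [Y5, Lem. 4.4]: with
`sᵢ = lᵢ(lᵢσ - 2raᵢ)`, `l = ∑lᵢ`, `a = ∑aᵢ`, `S = l(lσ - 2ra)` and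
`k = l - maxᵢ lᵢ`, if all `sᵢ ≥ -2` and some `s_{i₀} ≥ 0`, then
`∑_{i<j} (lᵢlⱼσ - r(lᵢaⱼ + lⱼaᵢ)) ≥ kS/(2l) - (l-1-k)k` as rational numbers. -/
theorem stmt_7 (r σ : ℤ) (hσ : Even σ)
    (t : ℕ) (ht : 1 ≤ t) (l a : ℕ → ℤ)
    (hl : ∀ i < t, 1 ≤ l i)
    (hs : ∀ i < t, l i * (l i * σ - 2 * r * a i) ≥ -2)
    (lsum asum S k : ℤ)
    (hlsum : lsum = ∑ i ∈ Finset.range t, l i)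
    (hasum : asum = ∑ i ∈ Finset.range t, a i)
    (hS : S = lsum * (lsum * σ - 2 * r * asum))
    (hk : k = lsum -
      (Finset.range t).sup' (Finset.nonempty_range_iff.mpr (by omega)) l) :
    ((∑ p ∈ (Finset.range t ×ˢ Finset.range t).filter (fun p => p.1 < p.2),
        (l p.1 * l p.2 * σ - r * (l p.1 * a p.2 + l p.2 * a p.1)) : ℤ) : ℚ)
      ≥ (k : ℚ) * S / (2 * lsum) - ((lsum : ℚ) - 1 - k) * k := by
  obtain ⟨τ, rfl⟩ := hσ
  set c : ℕ → ℤ := fun i => l i * τ - r * a i with hc_def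
  have hl' : ∀ i ∈ range t, 1 ≤ l i := fun i hi => hl i (mem_range.1 hi)
  have hc : ∀ i ∈ range t, -1 ≤ c i := fun i hi => by
    have hsi : l i * (l i * (τ + τ) - 2 * r * a i) = 2 * (l i * c i) := by rw [hc_def]; ring
    exact neg_one_le_of_neg_one_le_mul (hl' i hi) (by linarith [hs i (mem_range.1 hi)])
  obtain ⟨j, hj, hjmax⟩ := exists_mem_eq_sup'
    (nonempty_range_iff.mpr (by omega) : (range t).Nonempty) l
  have hkj : k = lsum - l j := by rw [hk, hjmax]
  have hlpos : 0 < lsum := hlsum ▸ ((hl' j hj).trans_lt' one_pos).trans_le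
    (single_le_sum (fun i hi => zero_le_one.trans (hl' i hi)) hj)
  have hC : lsum * (τ + τ) - 2 * r * asum = 2 * ∑ i ∈ range t, c i := by
    simp only [hlsum, hasum, sum_mul, mul_sum, ← sum_sub_distrib]
    exact sum_congr rfl fun _ _ => by ring
  have hq : (k : ℚ) * S / (2 * lsum) = k * ∑ i ∈ range t, c i := by
    rw [hS, hC]; push_cast; field_simp
  have hint : k * ∑ i ∈ range t, c i - (lsum - 1 - k) * k ≤ ∑ p ∈ (range t ×ˢ range t).filter
      (fun p => p.1 < p.2), (l p.1 * c p.2 + l p.2 * c p.1) := by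
    rw [hkj, hlsum]
    linarith [le_sum_filter_lt_mul_add_mul hj (fun i hi => hjmax ▸ le_sup' l hi) hl' hc]
  have hterm : ∀ p : ℕ × ℕ, l p.1 * l p.2 * (τ + τ) - r * (l p.1 * a p.2 + l p.2 * a p.1)
      = l p.1 * c p.2 + l p.2 * c p.1 := fun p => by rw [hc_def]; ring
  rw [ge_iff_le, hq, sum_congr rfl fun p _ => hterm p]
  exact_mod_cast hint
end

section
/- Let r0, l1, l2 be positive integers and a2, n nonnegative integers satisfying: a2*r0 > l2, n*l2 > a2*l1, and (a2 + n)*r0 < 2*(l1 + l2). Then l1*(a2*r0 - 2*l2) + n*((l1 + l2)*r0 - 1) - l1^2 >= 2. -/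
/-! Write `l = l₁ + l₂`. Chaining `l₂ / r₀ < a₂ < n l₂ / l₁` gives `l₁ < n r₀`, while subtracting
`a₂ r₀ > l₂` from `(a₂ + n) r₀ < 2l` gives `n r₀ < l + l₁`. Over `ℤ` these become
`a₂ r₀ - l₂ - 1 ≥ 0`, `n r₀ - l₁ - 1 ≥ 0` and `l + l₁ - 2 - n ≥ n r₀ - n ≥ 0`, and the left-hand side
minus `2` is the combination `l₁ (a₂ r₀ - l₂ - 1) + l (n r₀ - l₁ - 1) + (l + l₁ - 2 - n)` of them. -/

theorem lt_mul_of_lt_mul_of_mul_lt_mul {R : Type*} [CommRing R] [LinearOrder R]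
    [IsStrictOrderedRing R] {a l₁ l₂ n r : R} (hl₁ : 0 < l₁) (hl₂ : 0 < l₂) (hr : 0 < r)
    (h₁ : l₂ < a * r) (h₂ : a * l₁ < n * l₂) : l₁ < n * r := by
  have h : l₁ * l₂ < n * r * l₂ :=
    calc l₁ * l₂ < l₁ * (a * r) := mul_lt_mul_of_pos_left h₁ hl₁
      _ = a * l₁ * r := by ring
      _ < n * l₂ * r := mul_lt_mul_of_pos_right h₂ hr
      _ = n * r * l₂ := by ring
  exact lt_of_mul_lt_mul_right h hl₂.le

theorem stmt_10_general (r₀ l₁ l₂ a₂ n : ℤ)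
    (hr₀ : 0 < r₀) (hl₁ : 0 < l₁) (hl₂ : 0 < l₂)
    (h1 : a₂ * r₀ > l₂) (h2 : n * l₂ > a₂ * l₁)
    (h3 : (a₂ + n) * r₀ < 2 * (l₁ + l₂)) :
    l₁ * (a₂ * r₀ - 2 * l₂) + n * ((l₁ + l₂) * r₀ - 1) - l₁ ^ 2 ≥ 2 := by
  have hnr_gt : l₁ < n * r₀ := lt_mul_of_lt_mul_of_mul_lt_mul hl₁ hl₂ hr₀ h1 h2
  have hnr_le : n * r₀ ≤ 2 * l₁ + l₂ - 2 := by linarith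
  have hn_le : n ≤ n * r₀ :=
    le_mul_of_one_le_right (pos_of_mul_pos_left (hl₁.trans hnr_gt) hr₀.le).le hr₀
  have hl₁_mul : 0 ≤ l₁ * (a₂ * r₀ - l₂ - 1) := mul_nonneg hl₁.le (by linarith)
  have hl_mul : 0 ≤ (l₁ + l₂) * (n * r₀ - l₁ - 1) := mul_nonneg (by positivity) (by linarith)
  linear_combination hl₁_mul + hl_mul + hnr_le + hn_le

/-- Inequality (3.8) in the proof of Lemma 3.1 (Case B): if `r₀, l₁, l₂ > 0`,
`a₂, n ≥ 0`, `a₂r₀ > l₂`, `nl₂ > a₂l₁` and `(a₂+n)r₀ < 2(l₁+l₂)`, then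
`l₁(a₂r₀ - 2l₂) + n((l₁+l₂)r₀ - 1) - l₁² ≥ 2`. -/
theorem stmt_10 (r₀ l₁ l₂ a₂ n : ℤ)
    (hr₀ : 0 < r₀) (hl₁ : 0 < l₁) (hl₂ : 0 < l₂)
    (ha₂ : 0 ≤ a₂) (hn : 0 ≤ n)
    (h1 : a₂ * r₀ > l₂) (h2 : n * l₂ > a₂ * l₁)
    (h3 : (a₂ + n) * r₀ < 2 * (l₁ + l₂)) :
    l₁ * (a₂ * r₀ - 2 * l₂) + n * ((l₁ + l₂) * r₀ - 1) - l₁ ^ 2 ≥ 2 :=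
  stmt_10_general r₀ l₁ l₂ a₂ n hr₀ hl₁ hl₂ h1 h2 h3
end

section
/- Let r, r1, d, d1, l, a, q, s be integers with r > 0, r1 > 0, l > 0, d*r1 - d1*r = 1 and a*r1 + q*l = 1. Set k = r1*(q*r + r1*s) - r^2, and on Z + Z + Z with elements (rk, m, c) define the pairing <(rk, m, c), (rk', m', c')> = 2*k*m*m' - rk*c' - c*rk'. Define v' = (l*r, l*d, l*((1 + d*r1)*d1*s + d^2*q*r1 - r*d^2) + a) and v1 = (r1, d1, r1*(-d^2 + d1^2*s) + d1^2*r*q + 2*d). Then: (i) <v1, v1> = -2; (ii) <v', v'> = 2*l*(l*s - r*a); (iii) <v1, v'> = -1. Moreover, if l*s - r*a >= 0 and r1 > l*r, then k > 0. -/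
/-!
Each of the three pairings is a polynomial identity modulo `d r₁ - d₁ r = 1` and
`a r₁ + q l = 1`; e.g. `⟨v₁, v₁⟩ + 2 = 2 ((r₁ d - 1)² - (r d₁)²)`, which factors through
`r₁ d - r d₁ - 1 = 0`. Positivity of `k` comes from
`l k = r₁² (l s - r a) + r (r₁ - l r)`.
-/

/-- The Mukai pairing on `ℤ ⊕ ℤ·H' ⊕ ℤ·ω'` for a polarized K3 surface with
`(H'²) = 2k`: `⟨(rk, m, c), (rk', m', c')⟩ = 2k·m·m' - rk·c' - c·rk'`. -/
def mukaiPairing (k : ℤ) (x y : ℤ × ℤ × ℤ) : ℤ :=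
  2 * k * x.2.1 * y.2.1 - x.1 * y.2.2 - x.2.2 * y.1

lemma mul_polarization_degree_eq {r r₁ l a q s : ℤ} (h : a * r₁ + q * l = 1) :
    l * (r₁ * (q * r + r₁ * s) - r ^ 2) = r₁ ^ 2 * (l * s - r * a) + r * (r₁ - l * r) := by
  linear_combination r * r₁ * h

lemma polarization_degree_pos {r r₁ l a q s : ℤ} (hr : 0 < r) (hl : 0 < l)
    (h : a * r₁ + q * l = 1) (hdisc : 0 ≤ l * s - r * a) (hlt : l * r < r₁) :
    0 < r₁ * (q * r + r₁ * s) - r ^ 2 := by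
  refine pos_of_mul_pos_right ?_ hl.le
  rw [mul_polarization_degree_eq h]
  have : 0 < r * (r₁ - l * r) := mul_pos hr (by linarith)
  positivity

theorem stmt_12_general (r r₁ d d₁ l a q s : ℤ)
    (hr : 0 < r) (hl : 0 < l)
    (h1 : d * r₁ - d₁ * r = 1) (h2 : a * r₁ + q * l = 1)
    (k : ℤ) (hk : k = r₁ * (q * r + r₁ * s) - r ^ 2)
    (v' v₁ : ℤ × ℤ × ℤ)
    (hv' : v' = (l * r, l * d,
      l * ((1 + d * r₁) * d₁ * s + d ^ 2 * q * r₁ - r * d ^ 2) + a))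
    (hv₁ : v₁ = (r₁, d₁, r₁ * (-d ^ 2 + d₁ ^ 2 * s) + d₁ ^ 2 * r * q + 2 * d)) :
    mukaiPairing k v₁ v₁ = -2 ∧
    mukaiPairing k v' v' = 2 * l * (l * s - r * a) ∧
    mukaiPairing k v₁ v' = -1 ∧
    (0 ≤ l * s - r * a → l * r < r₁ → 0 < k) := by
  subst hk hv' hv₁
  refine ⟨?_, ?_, ?_, fun hdisc hlt => polarization_degree_pos hr hl h2 hdisc hlt⟩
  · unfold mukaiPairing
    linear_combination (2 * r₁ * d + 2 * r * d₁ - 2) * h1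
  · unfold mukaiPairing
    linear_combination 2 * l ^ 2 * s * (r₁ * d + 1) * h1
  · unfold mukaiPairing
    linear_combination l * (r * d₁ * q + r₁ * d₁ * s - r₁ * d * q + 2 * r * d - q) * h1 - h2

/-- The construction in Section 2.2.1: with `d·r₁ - d₁·r = 1`,
`a·r₁ + q·l = 1` and `k = r₁(qr + r₁s) - r²`, the vectors
`v' = (lr, ld, l((1 + dr₁)d₁s + d²qr₁ - rd²) + a)` and
`v₁ = (r₁, d₁, r₁(-d² + d₁²s) + d₁²rq + 2d)` satisfy
`⟨v₁,v₁⟩ = -2`, `⟨v',v'⟩ = 2l(ls - ra)`, `⟨v₁,v'⟩ = -1`; moreover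
`k > 0` whenever `ls - ra ≥ 0` and `r₁ > lr`. -/
theorem stmt_12 (r r₁ d d₁ l a q s : ℤ)
    (hr : 0 < r) (hr₁ : 0 < r₁) (hl : 0 < l)
    (h1 : d * r₁ - d₁ * r = 1) (h2 : a * r₁ + q * l = 1)
    (k : ℤ) (hk : k = r₁ * (q * r + r₁ * s) - r ^ 2)
    (v' v₁ : ℤ × ℤ × ℤ)
    (hv' : v' = (l * r, l * d,
      l * ((1 + d * r₁) * d₁ * s + d ^ 2 * q * r₁ - r * d ^ 2) + a))
    (hv₁ : v₁ = (r₁, d₁, r₁ * (-d ^ 2 + d₁ ^ 2 * s) + d₁ ^ 2 * r * q + 2 * d)) :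
    mukaiPairing k v₁ v₁ = -2 ∧
    mukaiPairing k v' v' = 2 * l * (l * s - r * a) ∧
    mukaiPairing k v₁ v' = -1 ∧
    (0 ≤ l * s - r * a → l * r < r₁ → 0 < k) :=
  stmt_12_general r r₁ d d₁ l a q s hr hl h1 h2 k hk v' v₁ hv' hv₁
end
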